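/- arXiv:2311.10527 — 5 statements merged into one kernel-verified Lean document; each statement's English description precedes it below -/
import Mathlib

section
/- For a prime p, a positive integer α, and a natural number n with n ≤ p^α − 1, the p-adic valuation of ∑_{x=0}^{p^α−1} C(x, n) equals α − ord_p(n+1), where ord_p denotes the p-adic valuation. -/
/-! By the hockey-stick identity the sum is `C(p^α, n+1)`, and by Kummer's theorem the
valuation of `C(p^α, k)` is the number of carries when adding `k` and `p^α - k` in base `p`,
which is `α - ord_p k`. -/

open Finset

theorem Nat.sum_range_choose_eq_choose_succ (m n : ℕ) :
    ∑ x ∈ range m, x.choose n = m.choose (n + 1) := by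
  induction m with
  | zero => simp
  | succ m ih => rw [sum_range_succ, ih, Nat.choose_succ_succ', add_comm]

theorem padicValNat_choose_prime_pow {p n k : ℕ} (hp : p.Prime) (hkn : k ≤ p ^ n)
    (hk0 : k ≠ 0) : padicValNat p ((p ^ n).choose k) = n - padicValNat p k := by
  simpa only [Nat.factorization_def _ hp] using Nat.factorization_choose_prime_pow hp hkn hk0

theorem stmt_1_general (p : ℕ) (hp : p.Prime) (α : ℕ) (n : ℕ)
    (hn : n ≤ p ^ α - 1) :
    padicValNat p (∑ x ∈ Finset.range (p ^ α), x.choose n)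
      = α - padicValNat p (n + 1) := by
  have hn1 : n + 1 ≤ p ^ α := by
    have := pow_pos hp.pos α
    omega
  rw [Nat.sum_range_choose_eq_choose_succ, padicValNat_choose_prime_pow hp hn1 n.succ_ne_zero]

theorem stmt_1 (p : ℕ) (hp : p.Prime) (α : ℕ) (hα : 0 < α) (n : ℕ)
    (hn : n ≤ p ^ α - 1) :
    padicValNat p (∑ x ∈ Finset.range (p ^ α), x.choose n)
      = α - padicValNat p (n + 1) :=
  stmt_1_general p hp α n hn
end

section
/- Let p be prime, N ≥ 1, α_1 ≥ ⋯ ≥ α_N ≥ 1 integers, D ∈ ℕ, and set α := ∑ α_i. Define the conjugate partition α_j' := #{i : α_i ≥ j}, and define (D_1,…,D_α) to be the sequence consisting of α_1' copies of 1, then α_2' copies of p, …, then α_{α_1}' copies of p^{α_1−1}. Define ν_p(ᾱ, n̄) := ∑_{i=1}^N ν_p(α_i, n_i), where ν_p(α_i, n_i) = α_i − ord_p(n_i+1) if n_i ≤ p^{α_i}−1 and ∞ otherwise. Then the minimum of ν_p(ᾱ, n̄) over all n̄ ∈ ℕ^N with n_1 + ⋯ + n_N ≤ D equals α − max{0 ≤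 t ≤ α : D_1 + ⋯ + D_t ≤ D/(p−1)}. -/
/-!
With `k i = ord_p (n i + 1)`, the cheapest `n` realising given `k ≤ α` is `n i = p ^ k i - 1`,
so one has to maximise `∑ k i` subject to `k ≤ α` and `∑ (p ^ k i - 1) ≤ D`. Raising `k i` from `K` to
`K + 1` costs `(p - 1) p ^ K`, and `D_1 ≤ D_2 ≤ ⋯` lists the numbers `p ^ K` over all cells of
the Young diagram of `α`, level by level. Hence the cheapest `k` with `∑ k i = t` costs exactly
`(p - 1) (D_1 + ⋯ + D_t)`: greedily raising a smallest raisable `k i` attains this, and lowering a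
largest `k i` shows by induction that nothing is cheaper.
-/

open Finset

theorem sum_card_filter_le_eq_sum_min {ι : Type*} [Fintype ι] (α : ι → ℕ) (K : ℕ) :
    ∑ j ∈ Icc 1 K, #{i | j ≤ α i} = ∑ i, min (α i) K := by
  simp only [card_eq_sum_ones, sum_filter]
  rw [sum_comm]
  refine sum_congr rfl fun i _ => ?_
  rw [← sum_filter, ← card_eq_sum_ones]
  have : {j ∈ Icc 1 K | j ≤ α i} = Icc 1 (min (α i) K) := by
    ext j; simp only [mem_filter, mem_Icc, le_min_iff]; omega
  rw [this, Nat.card_Icc, Nat.add_sub_cancel]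

theorem sum_min_mono {ι : Type*} [Fintype ι] (α : ι → ℕ) :
    Monotone fun K => ∑ i, min (α i) K :=
  fun _ _ h => sum_le_sum fun _ _ => min_le_min_left _ h

theorem sum_comp_update_add {ι : Type*} [Fintype ι] [DecidableEq ι] (f : ℕ → ℕ) (k : ι → ℕ)
    (i : ι) (v : ℕ) :
    ∑ j, f (Function.update k i v j) + f (k i) = ∑ j, f (k j) + f v := by
  have := sum_erase_add univ (f ∘ k) (mem_univ i)
  rw [← Function.comp_def f, Function.comp_update, sum_update_of_mem (mem_univ i),
    sdiff_singleton_eq_erase]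
  simp only [Function.comp_apply] at this ⊢
  omega

theorem pow_succ_sub_one_eq (p K : ℕ) : p ^ (K + 1) - 1 = p ^ K - 1 + (p - 1) * p ^ K := by
  rcases Nat.eq_zero_or_pos p with rfl | hp
  · cases K <;> simp
  have h1 := Nat.one_le_pow K p hp
  have h2 : p ^ K ≤ p * p ^ K := Nat.le_mul_of_pos_left _ hp
  rw [Nat.sub_one_mul, pow_succ']
  omega

/-- The sequence `D_t` of the statement: `∑ i, min (α i) j = α'_1 + ⋯ + α'_j`, so the exponent is
the number of levels of the Young diagram of `α` completed before position `t`. -/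
def powSeq {ι : Type*} [Fintype ι] (p : ℕ) (α : ι → ℕ) (L t : ℕ) : ℕ :=
  p ^ #{j ∈ Icc 1 L | ∑ i, min (α i) j < t}

section
variable {ι : Type*} [Fintype ι] {p : ℕ} {α : ι → ℕ} {L : ℕ}

theorem powSeq_le (hp : 0 < p) {t K : ℕ} (ht : t ≤ ∑ i, min (α i) K) :
    powSeq p α L t ≤ p ^ (K - 1) := by
  refine Nat.pow_le_pow_right hp ?_
  calc #{j ∈ Icc 1 L | ∑ i, min (α i) j < t} ≤ #(Ico 1 K) := by
        refine card_le_card fun j hj => ?_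
        simp only [mem_filter, mem_Icc, mem_Ico] at hj ⊢
        exact ⟨hj.1.1, lt_of_not_ge fun hKj => (hj.2.trans_le ht).not_ge (sum_min_mono α hKj)⟩
    _ = K - 1 := Nat.card_Ico 1 K

theorem pow_le_powSeq (hp : 0 < p) {t K : ℕ} (hK : K ≤ L) (ht : ∑ i, min (α i) K < t) :
    p ^ K ≤ powSeq p α L t := by
  refine Nat.pow_le_pow_right hp ?_
  calc K = #(Icc 1 K) := by simp
    _ ≤ _ := card_le_card fun j hj => by
        simp only [mem_filter, mem_Icc] at hj ⊢
        exact ⟨⟨hj.1, hj.2.trans hK⟩, (sum_min_mono α hj.2).trans_lt ht⟩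

theorem mul_sum_powSeq_le_sum_pow_sub_one (hp : 0 < p) (k : ι → ℕ) (hk : ∀ i, k i ≤ α i) :
    (p - 1) * ∑ t ∈ Icc 1 (∑ i, k i), powSeq p α L t ≤ ∑ i, (p ^ k i - 1) := by
  classical
  induction hT : ∑ i, k i generalizing k with
  | zero => simp
  | succ T ih =>
    obtain ⟨i, -, hi⟩ :=
      exists_max_image univ k (nonempty_of_sum_ne_zero (s := univ) (f := k) (by omega))
    have hfill : T + 1 ≤ ∑ j, min (α j) (k i) :=
      hT ▸ sum_le_sum fun j _ => le_min (hk j) (hi j (mem_univ j))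
    obtain ⟨K, hK⟩ : ∃ K, k i = K + 1 := Nat.exists_eq_succ_of_ne_zero fun h0 => by
      simp [h0] at hfill
    have hsum := sum_comp_update_add id k i K
    have hcost := sum_comp_update_add (fun x => p ^ x - 1) k i K
    have hstep := powSeq_le (L := L) hp hfill
    simp only [id, hK, pow_succ_sub_one_eq, Nat.add_sub_cancel] at hsum hcost hstep
    have hprev := ih (Function.update k i K) (fun j => by
      rcases eq_or_ne j i with rfl | hj
      · simp only [Function.update_self]; have := hk j; omega
      · simpa [hj] using hk j) (by omega)
    rw [sum_Icc_succ_top (by omega), mul_add]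
    calc _ ≤ ∑ j, (p ^ Function.update k i K j - 1) + (p - 1) * p ^ K :=
          add_le_add hprev (Nat.mul_le_mul_left _ hstep)
      _ = _ := by omega

theorem exists_sum_eq_sum_pow_sub_one_le (hp : 0 < p) (hαL : ∀ i, α i ≤ L) {T : ℕ}
    (hT : T ≤ ∑ i, α i) :
    ∃ k : ι → ℕ, (∀ i, k i ≤ α i) ∧ ∑ i, k i = T ∧
      ∑ i, (p ^ k i - 1) ≤ (p - 1) * ∑ t ∈ Icc 1 T, powSeq p α L t := by
  classical
  induction T with
  | zero => exact ⟨0, fun _ => Nat.zero_le _, by simp, by simp⟩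
  | succ T ih =>
    obtain ⟨k, hkα, rfl, hk⟩ := ih (by omega)
    have hgrow : ({i | k i < α i} : Finset ι).Nonempty := by
      by_contra! h
      have : ∑ i, α i ≤ ∑ i, k i := sum_le_sum fun i _ => by
        simpa using (filter_eq_empty_iff.1 h) (mem_univ i)
      omega
    obtain ⟨i, hi, hmin⟩ := exists_min_image _ k hgrow
    simp only [mem_filter, mem_univ, true_and] at hi hmin
    have hfill : ∑ j, min (α j) (k i) < ∑ j, k j + 1 :=
      Nat.lt_succ_of_le <| sum_le_sum fun j _ => by
        by_cases hj : k j < α j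
        · exact (min_le_right _ _).trans (hmin j hj)
        · exact (min_le_left _ _).trans (not_lt.1 hj)
    have hstep := pow_le_powSeq hp ((hi.trans_le (hαL i)).le) hfill
    have hsum := sum_comp_update_add id k i (k i + 1)
    have hcost := sum_comp_update_add (fun x => p ^ x - 1) k i (k i + 1)
    simp only [id, pow_succ_sub_one_eq] at hsum hcost
    refine ⟨Function.update k i (k i + 1), fun j => ?_, by omega, ?_⟩
    · rcases eq_or_ne j i with rfl | hj
      · simpa using hi
      · simpa [hj] using hkα j
    · rw [sum_Icc_succ_top (by omega), mul_add]
      calc _ = ∑ j, (p ^ k j - 1) + (p - 1) * p ^ k i := by omega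
        _ ≤ _ := add_le_add hk (Nat.mul_le_mul_left _ hstep)

end

theorem pow_padicValNat_succ_sub_one_le (p n : ℕ) : p ^ padicValNat p (n + 1) - 1 ≤ n :=
  Nat.sub_le_of_le_add (Nat.le_of_dvd n.succ_pos pow_padicValNat_dvd)

theorem padicValNat_succ_le_of_le_pow_sub_one {p n a : ℕ} (hp : p.Prime) (h : n ≤ p ^ a - 1) :
    padicValNat p (n + 1) ≤ a := by
  have := Nat.one_le_pow a p hp.pos
  exact (Nat.pow_le_pow_iff_right hp.one_lt).1 <|
    (Nat.le_of_dvd n.succ_pos pow_padicValNat_dvd).trans (by omega)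

theorem padicValNat_pow_sub_one_add_one {p : ℕ} [hp : Fact p.Prime] (k : ℕ) :
    padicValNat p (p ^ k - 1 + 1) = k := by
  rw [Nat.sub_add_cancel (Nat.one_le_pow _ _ hp.out.pos), padicValNat.prime_pow]

def padicNu (p a n : ℕ) : ℕ∞ :=
  if n ≤ p ^ a - 1 then ((a - padicValNat p (n + 1) : ℕ) : ℕ∞) else ⊤

theorem sum_padicNu_eq {ι : Type*} [Fintype ι] {p : ℕ} (hp : p.Prime) {α n : ι → ℕ}
    (hn : ∀ i, n i ≤ p ^ α i - 1) :
    ∑ i, padicNu p (α i) (n i) = ((∑ i, α i - ∑ i, padicValNat p (n i + 1) : ℕ) : ℕ∞) := by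
  simp only [padicNu, if_pos (hn _), ← Nat.cast_sum]
  rw [sum_tsub_distrib _ fun i _ => padicValNat_succ_le_of_le_pow_sub_one hp (hn i)]

theorem sInf_sum_padicNu_eq {ι : Type*} [Fintype ι] {p : ℕ} (hp : p.Prime) {α : ι → ℕ} {L : ℕ}
    (hαL : ∀ i, α i ≤ L) (D : ℕ) {t₀ : ℕ}
    (ht₀ : IsGreatest {t | t ≤ ∑ i, α i ∧ (p - 1) * ∑ s ∈ Icc 1 t, powSeq p α L s ≤ D} t₀) :
    sInf {v : ℕ∞ | ∃ n : ι → ℕ, ∑ i, n i ≤ D ∧ v = ∑ i, padicNu p (α i) (n i)}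
      = ((∑ i, α i - t₀ : ℕ) : ℕ∞) := by
  have := Fact.mk hp
  refine le_antisymm ?_ (le_sInf ?_)
  · obtain ⟨k, hkα, hksum, hkcost⟩ := exists_sum_eq_sum_pow_sub_one_le hp.pos hαL ht₀.1.1
    refine sInf_le ⟨fun i => p ^ k i - 1, hkcost.trans ht₀.1.2, ?_⟩
    rw [sum_padicNu_eq hp fun i => Nat.sub_le_sub_right (Nat.pow_le_pow_right hp.pos (hkα i)) 1]
    simp only [padicValNat_pow_sub_one_add_one, hksum]
  · rintro _ ⟨n, hnD, rfl⟩
    by_cases hn : ∀ i, n i ≤ p ^ α i - 1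
    · have hv i := padicValNat_succ_le_of_le_pow_sub_one hp (hn i)
      have hcost : ∑ i, (p ^ padicValNat p (n i + 1) - 1) ≤ D :=
        (sum_le_sum fun i _ => pow_padicValNat_succ_sub_one_le p (n i)).trans hnD
      have : ∑ i, padicValNat p (n i + 1) ≤ t₀ := ht₀.2
        ⟨sum_le_sum fun i _ => hv i, (mul_sum_powSeq_le_sum_pow_sub_one hp.pos _ hv).trans hcost⟩
      rw [sum_padicNu_eq hp hn]
      exact_mod_cast Nat.sub_le_sub_left this _
    · obtain ⟨i, hi⟩ := not_forall.1 hn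
      rw [ENat.sum_eq_top.2 ⟨i, mem_univ i, if_neg hi⟩]
      exact le_top

theorem stmt_12 (p : ℕ) (hp : p.Prime) (N : ℕ) (hN : 0 < N)
    (α : Fin N → ℕ)
    (hmono : ∀ i j : Fin N, i ≤ j → α j ≤ α i)
    (D : ℕ)
    (αtot : ℕ) (hαtot : αtot = ∑ i, α i)
    (α' : ℕ → ℕ)
    (hα' : ∀ j, α' j = (Finset.univ.filter (fun i : Fin N => j ≤ α i)).card)
    -- Dseq t is the t-th element of the sequence consisting of α'_1 copies of 1,
    -- then α'_2 copies of p, …, then α'_{α_1} copies of p^{α_1-1}: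
    (Dseq : ℕ → ℕ)
    (hD : ∀ t, Dseq t
      = p ^ ((Finset.Icc 1 (α ⟨0, hN⟩)).filter
          (fun j => ∑ k ∈ Finset.Icc 1 j, α' k < t)).card)
    (νp : ℕ → ℕ → ℕ∞)
    (hν : ∀ a n : ℕ, νp a n
      = if n ≤ p ^ a - 1 then ((a - padicValNat p (n + 1) : ℕ) : ℕ∞) else ⊤) :
    sInf {v : ℕ∞ | ∃ n : Fin N → ℕ, ∑ i, n i ≤ D ∧ v = ∑ i, νp (α i) (n i)}
      = ((αtot -
          ((Finset.range (αtot + 1)).filter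
            (fun t => (p - 1) * ∑ k ∈ Finset.Icc 1 t, Dseq k ≤ D)).max' 
            (by
              refine ⟨0, ?_⟩
              simp) : ℕ) : ℕ∞) := by
  obtain rfl : Dseq = powSeq p α (α ⟨0, hN⟩) := funext fun t => by
    simp only [hD, hα', sum_card_filter_le_eq_sum_min, powSeq]
  obtain rfl : νp = padicNu p := funext fun a => funext (hν a)
  subst hαtot
  refine sInf_sum_padicNu_eq hp (fun i => hmono ⟨0, hN⟩ i (Fin.mk_le_of_le_val i.val.zero_le)) D ?_
  refine (congrArg₂ IsGreatest ?_ rfl).mpr (isGreatest_max' _ _)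
  ext t
  simp
end

section
/- In the setting of the previous minimization (p prime, α_1 ≥ ⋯ ≥ α_N ≥ 1, D ∈ ℕ, V_p(ᾱ,D) := min over n̄ ∈ ℕ^N with |n̄| ≤ D of ∑_i ν_p(α_i, n_i)): V_p(ᾱ, D) > 0 if and only if D < ∑_{i=1}^N (p^{α_i} − 1). -/
/-! The summand `ν_p(α, n)` vanishes exactly at `n = p^α - 1`, the only `n < p^α` with
`p^α ∣ n + 1`; so the minimum is `0` iff the tuple `(p^{α_i} - 1)_i` fits into the
budget `D`. -/

open Finset

lemma le_padicValNat_succ_iff_eq_pow_sub_one {p a n : ℕ} (hp : p.Prime) :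
    n ≤ p ^ a - 1 ∧ a ≤ padicValNat p (n + 1) ↔ n = p ^ a - 1 := by
  have : Fact p.Prime := ⟨hp⟩
  have hpow : 0 < p ^ a := pow_pos hp.pos a
  constructor
  · rintro ⟨hle, hval⟩
    have hdvd : p ^ a ∣ n + 1 := (padicValNat_dvd_iff_le n.succ_ne_zero).2 hval
    have := Nat.le_of_dvd n.succ_pos hdvd
    omega
  · rintro rfl
    rw [Nat.sub_add_cancel hpow, padicValNat.prime_pow]
    exact ⟨le_rfl, le_rfl⟩

lemma ite_padicValNat_eq_zero_iff {p a n : ℕ} (hp : p.Prime) :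
    (if n ≤ p ^ a - 1 then ((a - padicValNat p (n + 1) : ℕ) : ℕ∞) else ⊤) = 0
      ↔ n = p ^ a - 1 := by
  rw [← le_padicValNat_succ_iff_eq_pow_sub_one hp]
  split_ifs with h
  · rw [Nat.cast_eq_zero, Nat.sub_eq_zero_iff_le]
    exact (and_iff_right h).symm
  · simp [h]

lemma exists_sum_le_and_sum_eq_zero_iff {ι : Type*} [Fintype ι] (f : ι → ℕ → ℕ∞) (m : ι → ℕ)
    (hf : ∀ i n, f i n = 0 ↔ n = m i) (D : ℕ) :
    (∃ n : ι → ℕ, ∑ i, n i ≤ D ∧ 0 = ∑ i, f i (n i)) ↔ ∑ i, m i ≤ D := by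
  constructor
  · rintro ⟨n, hD, hzero⟩
    have hn : n = m := funext fun i =>
      (hf i (n i)).1 <| sum_eq_zero_iff.1 hzero.symm i (mem_univ i)
    exact hn ▸ hD
  · intro hD
    exact ⟨m, hD, (sum_eq_zero fun i _ => (hf i (m i)).2 rfl).symm⟩

theorem stmt_13_general (p : ℕ) (hp : p.Prime) (N : ℕ)
    (α : Fin N → ℕ)
    (D : ℕ)
    (νp : ℕ → ℕ → ℕ∞)
    (hν : ∀ a n : ℕ, νp a n
      = if n ≤ p ^ a - 1 then ((a - padicValNat p (n + 1) : ℕ) : ℕ∞) else ⊤) :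
    0 < sInf {v : ℕ∞ | ∃ n : Fin N → ℕ, ∑ i, n i ≤ D ∧ v = ∑ i, νp (α i) (n i)}
      ↔ D < ∑ i, (p ^ α i - 1) := by
  have hzero : ∀ i n, νp (α i) n = 0 ↔ n = p ^ α i - 1 := fun i n => by
    rw [hν]
    exact ite_padicValNat_eq_zero_iff hp
  rw [pos_iff_ne_zero, Ne, ENat.sInf_eq_zero, Set.mem_ofPred_eq,
    exists_sum_le_and_sum_eq_zero_iff _ _ hzero, not_le]

theorem stmt_13 (p : ℕ) (hp : p.Prime) (N : ℕ) (hN : 0 < N)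
    (α : Fin N → ℕ) (hpos : ∀ i, 0 < α i)
    (hmono : ∀ i j : Fin N, i ≤ j → α j ≤ α i)
    (D : ℕ)
    (νp : ℕ → ℕ → ℕ∞)
    (hν : ∀ a n : ℕ, νp a n
      = if n ≤ p ^ a - 1 then ((a - padicValNat p (n + 1) : ℕ) : ℕ∞) else ⊤) :
    0 < sInf {v : ℕ∞ | ∃ n : Fin N → ℕ, ∑ i, n i ≤ D ∧ v = ∑ i, νp (α i) (n i)}
      ↔ D < ∑ i, (p ^ α i - 1) :=
  stmt_13_general p hp N α D νp hν
end

section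
/- Let p be prime and N a positive integer. Then the minimum of ∑_{i=1}^N (1 − ord_p(n_i + 1)) over all n̄ ∈ ℕ^N with n_i ≤ p − 1 for all i and n_1 + ⋯ + n_N ≤ D equals max(N − ⌊D/(p−1)⌋, 0), provided D < N(p−1); if D ≥ N(p−1) the minimum is 0. -/
lemma term_eq (p : ℕ) (hp : p.Prime) (n : ℕ) (hn : n ≤ p - 1) :
    1 - padicValNat p (n + 1) = if n = p - 1 then 0 else 1 := by
  split
  · next h =>
    subst h
    have : p - 1 + 1 = p := Nat.succ_pred_eq_of_pos hp.pos
    rw [this, padicValNat.self hp.one_lt]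
  · next h =>
    have h1 : n + 1 < p := by omega
    have : padicValNat p (n + 1) = 0 :=
      padicValNat.eq_zero_of_not_dvd (Nat.not_dvd_of_pos_of_lt (Nat.succ_pos n) h1)
    rw [this]

theorem stmt_15 (p : ℕ) (hp : p.Prime) (N : ℕ) (hN : 0 < N) (D : ℕ) :
    sInf {v : ℕ | ∃ n : Fin N → ℕ, (∀ i, n i ≤ p - 1) ∧ ∑ i, n i ≤ D ∧
        v = ∑ i, (1 - padicValNat p (n i + 1))}
      = if D < N * (p - 1) then N - D / (p - 1) else 0 := by
  have hp1 : 0 < p - 1 := by have := hp.two_le; omega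
  -- RHS equals N - D/(p-1) in all cases
  have hrhs : (if D < N * (p - 1) then N - D / (p - 1) else 0) = N - D / (p - 1) := by
    split
    · rfl
    · next h =>
      have : N ≤ D / (p - 1) := Nat.le_div_iff_mul_le hp1 |>.mpr (by omega)
      omega
  rw [hrhs]
  set k := min (D / (p - 1)) N with hk
  have hkN : k ≤ N := min_le_right _ _
  have hNk : N - k = N - D / (p - 1) := by omega
  -- witness
  set n₀ : Fin N → ℕ := fun i => if (i : ℕ) < k then p - 1 else 0 with hn₀
  have hsum₀ : ∑ i, n₀ i = k * (p - 1) := by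
    rw [hn₀]
    rw [Fin.sum_univ_eq_sum_range (fun i => if i < k then p - 1 else 0)]
    rw [Finset.sum_ite, Finset.sum_const, Finset.sum_const, smul_eq_mul, smul_eq_mul,
      mul_zero, add_zero]
    have : (Finset.range N).filter (· < k) = Finset.range k := by
      ext x
      simp only [Finset.mem_filter, Finset.mem_range]
      omega
    rw [this, Finset.card_range]
  have hmem : (N - k) ∈ {v : ℕ | ∃ n : Fin N → ℕ, (∀ i, n i ≤ p - 1) ∧ ∑ i, n i ≤ D ∧
      v = ∑ i, (1 - padicValNat p (n i + 1))} := by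
    refine ⟨n₀, fun i => by dsimp [n₀]; split <;> omega, ?_, ?_⟩
    · rw [hsum₀]
      have : k * (p - 1) ≤ (D / (p - 1)) * (p - 1) :=
        Nat.mul_le_mul_right _ (min_le_left _ _)
      calc k * (p - 1) ≤ (D / (p - 1)) * (p - 1) := this
        _ ≤ D := Nat.div_mul_le_self _ _
    · have : ∀ i : Fin N, 1 - padicValNat p (n₀ i + 1) = if (i : ℕ) < k then 0 else 1 := by
        intro i
        rw [term_eq p hp (n₀ i) (by dsimp [n₀]; split <;> omega)]
        dsimp [n₀]
        split
        · simp
        · simp; omega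
      rw [Finset.sum_congr rfl (fun i _ => this i)]
      rw [Fin.sum_univ_eq_sum_range (fun i => if i < k then 0 else 1)]
      rw [Finset.sum_ite, Finset.sum_const, Finset.sum_const]
      have h1 : (Finset.range N).filter (· < k) = Finset.range k := by
        ext x; simp only [Finset.mem_filter, Finset.mem_range]; omega
      have h2 : ((Finset.range N).filter (fun x => ¬ x < k)).card = N - k := by
        have := Finset.card_filter_add_card_filter_not (s := Finset.range N)
          (p := (· < k))
        rw [h1] at this
        simp only [Finset.card_range] at this
        omega
      rw [h1, h2]
      simp
  rw [← hNk]
  refine le_antisymm (Nat.sInf_le hmem) ?_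
  · refine le_csInf ⟨_, hmem⟩ ?_
    rintro v ⟨n, hn, hsum, rfl⟩
    set c := (Finset.univ.filter (fun i : Fin N => n i = p - 1)).card with hc
    have hcsum : c * (p - 1) ≤ ∑ i, n i := by
      calc c * (p - 1) = ∑ i ∈ Finset.univ.filter (fun i : Fin N => n i = p - 1), (p - 1) := by
            rw [Finset.sum_const, smul_eq_mul]
        _ = ∑ i ∈ Finset.univ.filter (fun i : Fin N => n i = p - 1), n i := by
            apply Finset.sum_congr rfl
            intro i hi
            simp only [Finset.mem_filter] at hi
            omega
        _ ≤ ∑ i, n i := Finset.sum_le_sum_of_subset (Finset.filter_subset _ _)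
    have hcD : c ≤ D / (p - 1) := (Nat.le_div_iff_mul_le hp1).mpr (le_trans hcsum hsum)
    have hval : ∑ i, (1 - padicValNat p (n i + 1)) = N - c := by
      have : ∀ i : Fin N, 1 - padicValNat p (n i + 1) = if n i = p - 1 then 0 else 1 :=
        fun i => term_eq p hp (n i) (hn i)
      rw [Finset.sum_congr rfl (fun i _ => this i), Finset.sum_ite, Finset.sum_const,
        Finset.sum_const]
      have := Finset.card_filter_add_card_filter_not (s := Finset.univ)
        (p := fun i : Fin N => n i = p - 1)
      simp only [Finset.card_univ, Fintype.card_fin] at this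
      simp only [smul_eq_mul, mul_zero, mul_one, zero_add]
      omega
    rw [hval]
    omega
end

section
/- Let D ∈ ℕ and let α, Λ_1 ≤ Λ_2 ≤ ⋯ ≤ Λ_α be positive integers, and (V_t)_{t≥1} a monotone decreasing sequence of positive integers with Λ_1 ≤ V_1. Set t_0 := max{1 ≤ t ≤ α : Λ_t ≤ V_1} and s_0 := max(⌈(Λ_1 + ⋯ + Λ_{t_0} − D)/V_1⌉, 0), and suppose V_t = V_1 for all 1 ≤ t ≤ s_0. Define S(s) := s − max{0 ≤ t ≤ α : Λ_1 + ⋯ + Λ_t ≤ V_1 + ⋯ + V_s + D} for s ∈ ℕ. Then S attains its minimum over ℕ at s_0, and S(s_0) = s_0 − t_0 if s_0 > 0, while S(0) = −max{0 ≤ t ≤ α : Λ_1 + ⋯ + Λ_t ≤ D} if s_0 = 0. -/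
/-!
Write `T s` for the largest `t ≤ α` with `Λ 1 + ⋯ + Λ t ≤ V 1 + ⋯ + V s + D`, so `S s = s - T s`,
and put `v = V 1`. The terms `Λ t` with `t ≤ t₀` cost at most `v`, the later ones more than `v`,
while every `V s` is at most `v`; and `s₀` is the least `s` with `Λ 1 + ⋯ + Λ t₀ ≤ s v + D`.
Since `V 1 + ⋯ + V s₀ = s₀ v`, the budget at `s₀` already covers the first `t₀` terms, and from
then on each unit step of `s` adds at most `v` to the budget, which buys at most one further term:
`T (s₀ + m) ≤ T s₀ + m`. Below `s₀` the budget, at most `s v + D`, is short of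
`Λ 1 + ⋯ + Λ t₀`, and each missing term is worth at most `v`, so by minimality of `s₀` at least
`s₀ - s` of the first `t₀` terms are missing: `T s ≤ t₀ - (s₀ - s)`. For `s₀ > 0` minimality
also gives `s₀ v + D < Λ 1 + ⋯ + Λ t₀ + v`, so `Λ (t₀ + 1) > v` does not fit and `T s₀ = t₀`.
-/

open Finset

def prefixSum (f : ℕ → ℕ) (n : ℕ) : ℕ := ∑ k ∈ Icc 1 n, f k

@[simp]
theorem prefixSum_zero (f : ℕ → ℕ) : prefixSum f 0 = 0 := by
  simp [prefixSum]

theorem prefixSum_succ (f : ℕ → ℕ) (n : ℕ) :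
    prefixSum f (n + 1) = prefixSum f n + f (n + 1) :=
  sum_Icc_succ_top (by omega) f

theorem prefixSum_mono (f : ℕ → ℕ) : Monotone (prefixSum f) :=
  monotone_nat_of_le_succ fun n => by simp [prefixSum_succ]

theorem prefixSum_add_mul_le {f : ℕ → ℕ} {a c : ℕ} (m : ℕ)
    (h : ∀ k, a < k → k ≤ a + m → c ≤ f k) :
    prefixSum f a + m * c ≤ prefixSum f (a + m) := by
  induction m with
  | zero => simp
  | succ m ih =>
    rw [← add_assoc, prefixSum_succ, add_one_mul, ← add_assoc]
    exact add_le_add (ih fun k hk hkm => h k hk (by omega)) (h _ (by omega) le_rfl)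

theorem prefixSum_le_add_mul {f : ℕ → ℕ} {a c : ℕ} (m : ℕ)
    (h : ∀ k, a < k → k ≤ a + m → f k ≤ c) :
    prefixSum f (a + m) ≤ prefixSum f a + m * c := by
  induction m with
  | zero => simp
  | succ m ih =>
    rw [← add_assoc, prefixSum_succ, add_one_mul, ← add_assoc]
    exact add_le_add (ih fun k hk hkm => h k hk (by omega)) (h _ (by omega) le_rfl)

theorem prefixSum_le_mul {f : ℕ → ℕ} {c : ℕ} (h : ∀ k, 1 ≤ k → f k ≤ c) (n : ℕ) :
    prefixSum f n ≤ n * c := by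
  simpa using prefixSum_le_add_mul (a := 0) n fun k hk _ => h k hk

def maxPrefixLe (Λ : ℕ → ℕ) (α b : ℕ) : ℕ :=
  ((range (α + 1)).filter fun t => prefixSum Λ t ≤ b).max' ⟨0, by simp⟩

section maxPrefixLe

variable {Λ : ℕ → ℕ} {α b t v t₀ : ℕ}

theorem le_maxPrefixLe_iff : t ≤ maxPrefixLe Λ α b ↔ t ≤ α ∧ prefixSum Λ t ≤ b := by
  obtain ⟨hα, hb⟩ : maxPrefixLe Λ α b ∈ range (α + 1) ∧
      prefixSum Λ (maxPrefixLe Λ α b) ≤ b := mem_filter.1 (max'_mem _ _)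
  rw [mem_range] at hα
  refine ⟨fun h => ⟨by omega, (prefixSum_mono Λ h).trans hb⟩, fun h => ?_⟩
  exact le_max' _ t (mem_filter.2 ⟨mem_range.2 (by omega), h.2⟩)

theorem maxPrefixLe_le : maxPrefixLe Λ α b ≤ α :=
  (le_maxPrefixLe_iff.1 le_rfl).1

theorem prefixSum_maxPrefixLe_le : prefixSum Λ (maxPrefixLe Λ α b) ≤ b :=
  (le_maxPrefixLe_iff.1 le_rfl).2

theorem maxPrefixLe_mono : Monotone (maxPrefixLe Λ α) := fun _ _ hb =>
  le_maxPrefixLe_iff.2 ⟨maxPrefixLe_le, prefixSum_maxPrefixLe_le.trans hb⟩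

theorem maxPrefixLe_le_of_le_add {t : ℕ} (hΛ : t + 1 ≤ α → v < Λ (t + 1))
    (hb : b ≤ prefixSum Λ t + v) : maxPrefixLe Λ α b ≤ t := by
  by_contra! h
  obtain ⟨hα, hsum⟩ := le_maxPrefixLe_iff.1 h
  rw [prefixSum_succ] at hsum
  have := hΛ hα
  omega

theorem maxPrefixLe_add_mul_le (hΛ : ∀ k, t₀ < k → k ≤ α → v < Λ k)
    (ht₀ : t₀ ≤ maxPrefixLe Λ α b) (m : ℕ) :
    maxPrefixLe Λ α (b + m * v) ≤ maxPrefixLe Λ α b + m := by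
  have hsum : prefixSum Λ (maxPrefixLe Λ α b) ≤ b := prefixSum_maxPrefixLe_le
  have hα : maxPrefixLe Λ α (b + m * v) ≤ α := maxPrefixLe_le
  set t := maxPrefixLe Λ α b
  by_contra! hlt
  have hnext : b < prefixSum Λ (t + 1) := by
    by_contra! h
    have := (le_maxPrefixLe_iff (α := α)).2 ⟨by omega, h⟩
    omega
  have hfar : prefixSum Λ (t + 1 + m) ≤ b + m * v :=
    ((le_maxPrefixLe_iff (α := α)).1 (by omega)).2
  have hgrow : prefixSum Λ (t + 1) + m * (v + 1) ≤ prefixSum Λ (t + 1 + m) :=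
    prefixSum_add_mul_le m fun k hk hkm => hΛ k (by omega) (by omega)
  nlinarith

theorem prefixSum_le_add_sub_maxPrefixLe_mul (hΛ : ∀ k, 1 ≤ k → k ≤ t₀ → Λ k ≤ v) :
    prefixSum Λ t₀ ≤ b + (t₀ - maxPrefixLe Λ α b) * v := by
  have hsum : prefixSum Λ (maxPrefixLe Λ α b) ≤ b := prefixSum_maxPrefixLe_le
  set t := maxPrefixLe Λ α b
  rcases le_total t₀ t with h | h
  · exact (prefixSum_mono Λ h).trans (hsum.trans le_self_add)
  · have := prefixSum_le_add_mul (a := t) (t₀ - t) fun k hk hkm => hΛ k (by omega) (by omega)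
    rw [Nat.add_sub_cancel' h] at this
    omega

end maxPrefixLe

section budget

variable {Λ V : ℕ → ℕ} {α D v t₀ : ℕ}

theorem maxPrefixLe_prefixSum_add_le (hV : ∀ k, 1 ≤ k → V k ≤ v)
    (hΛ : ∀ k, t₀ < k → k ≤ α → v < Λ k) {s : ℕ}
    (ht₀ : t₀ ≤ maxPrefixLe Λ α (prefixSum V s + D)) (m : ℕ) :
    maxPrefixLe Λ α (prefixSum V (s + m) + D) ≤ maxPrefixLe Λ α (prefixSum V s + D) + m := by
  have hbudget : prefixSum V (s + m) + D ≤ prefixSum V s + D + m * v := by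
    linarith [prefixSum_le_add_mul (a := s) m fun k hk _ => hV k (by omega)]
  exact (maxPrefixLe_mono hbudget).trans (maxPrefixLe_add_mul_le hΛ ht₀ m)

theorem maxPrefixLe_prefixSum_succ_le (hV : ∀ k, 1 ≤ k → V k ≤ v)
    (hΛ : ∀ k, t₀ < k → k ≤ α → v < Λ k) {s : ℕ} (hs : ¬prefixSum Λ t₀ ≤ s * v + D) :
    maxPrefixLe Λ α (prefixSum V (s + 1) + D) ≤ t₀ := by
  refine maxPrefixLe_le_of_le_add (hΛ _ (by omega)) ?_
  nlinarith [prefixSum_le_mul hV (s + 1)]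

theorem le_add_sub_maxPrefixLe {s₀ : ℕ} (hV : ∀ k, 1 ≤ k → V k ≤ v)
    (hΛ : ∀ k, 1 ≤ k → k ≤ t₀ → Λ k ≤ v)
    (hs₀ : ∀ m, prefixSum Λ t₀ ≤ m * v + D → s₀ ≤ m) (s : ℕ) :
    s₀ ≤ s + (t₀ - maxPrefixLe Λ α (prefixSum V s + D)) := by
  refine hs₀ _ <|
    (prefixSum_le_add_sub_maxPrefixLe_mul (α := α) (b := prefixSum V s + D) hΛ).trans ?_
  rw [add_mul]
  linarith [prefixSum_le_mul hV s]

end budget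

theorem toNat_ceil_div_le_iff {a v : ℤ} (hv : 0 < v) {m : ℕ} :
    (⌈(a : ℚ) / v⌉).toNat ≤ m ↔ a ≤ m * v := by
  rw [Int.toNat_le, Int.ceil_le, div_le_iff₀ (by exact_mod_cast hv)]
  exact_mod_cast Iff.rfl

theorem stmt_16 (D : ℕ) (α : ℕ) (hα : 0 < α)
    (Λ : ℕ → ℕ)
    (hΛmono : ∀ s t : ℕ, 1 ≤ s → s ≤ t → t ≤ α → Λ s ≤ Λ t)
    (V : ℕ → ℕ) (hVpos : ∀ t, 1 ≤ t → 0 < V t)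
    (hVmono : ∀ s t : ℕ, 1 ≤ s → s ≤ t → V t ≤ V s)
    (hΛV : Λ 1 ≤ V 1)
    (t₀ : ℕ)
    (ht₀ : t₀ = ((Finset.Icc 1 α).filter (fun t => Λ t ≤ V 1)).max'
        ⟨1, by simp [hΛV]; omega⟩)
    (s₀ : ℕ)
    (hs₀ : s₀ = (⌈(((∑ t ∈ Finset.Icc 1 t₀, Λ t : ℤ) - D : ℤ) / (V 1 : ℤ) : ℚ)⌉).toNat)
    (hV1 : ∀ t, 1 ≤ t → t ≤ s₀ → V t = V 1)
    (S : ℕ → ℤ)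
    (hS : ∀ s, S s = (s : ℤ) -
      (((Finset.range (α + 1)).filter
        (fun t => ∑ k ∈ Finset.Icc 1 t, Λ k ≤ ∑ k ∈ Finset.Icc 1 s, V k + D)).max'
        ⟨0, by simp⟩ : ℤ)) :
    (∀ s : ℕ, S s₀ ≤ S s) ∧
    (0 < s₀ → S s₀ = (s₀ : ℤ) - t₀) ∧
    (s₀ = 0 → S 0 = -(((Finset.range (α + 1)).filter
        (fun t => ∑ k ∈ Finset.Icc 1 t, Λ k ≤ D)).max' ⟨0, by simp⟩ : ℤ)) := by
  set v := V 1
  have hv : 0 < v := hVpos 1 le_rfl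
  obtain ⟨ht₀Icc, ht₀v⟩ : t₀ ∈ Icc 1 α ∧ Λ t₀ ≤ v := by
    rw [ht₀]; exact mem_filter.1 (max'_mem _ _)
  have hcheap : ∀ k, 1 ≤ k → k ≤ t₀ → Λ k ≤ v := fun k hk hkt =>
    (hΛmono k t₀ hk hkt (mem_Icc.1 ht₀Icc).2).trans ht₀v
  have hdear : ∀ k, t₀ < k → k ≤ α → v < Λ k := fun k hk hkα => by
    by_contra! h
    have := ht₀ ▸ le_max' _ k (mem_filter.2 ⟨mem_Icc.2 ⟨by omega, hkα⟩, h⟩)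
    omega
  have hs₀_le : ∀ m, s₀ ≤ m ↔ prefixSum Λ t₀ ≤ m * v + D := fun m => by
    rw [hs₀, ← Nat.cast_sum, toNat_ceil_div_le_iff (by exact_mod_cast hv)]
    unfold prefixSum
    omega
  have hV : ∀ k, 1 ≤ k → V k ≤ v := fun k hk => hVmono 1 k le_rfl hk
  have hT : ∀ s, S s = s - maxPrefixLe Λ α (prefixSum V s + D) := hS
  have ht₀_le : t₀ ≤ maxPrefixLe Λ α (prefixSum V s₀ + D) := by
    have hW₀ : s₀ * v ≤ prefixSum V s₀ := by
      simpa using prefixSum_add_mul_le (a := 0) s₀ fun k hk hks => (hV1 k hk (by omega)).ge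
    exact le_maxPrefixLe_iff.2 ⟨(mem_Icc.1 ht₀Icc).2, by linarith [(hs₀_le s₀).1 le_rfl]⟩
  refine ⟨fun s => ?_, fun hpos => ?_, fun _ => ?_⟩
  · rw [hT, hT]
    rcases le_or_gt s₀ s with h | h
    · obtain ⟨m, rfl⟩ := Nat.exists_eq_add_of_le h
      have := maxPrefixLe_prefixSum_add_le hV hdear ht₀_le m
      push_cast
      omega
    · have := le_add_sub_maxPrefixLe (α := α) hV hcheap (fun m => (hs₀_le m).2) s
      omega
  · obtain ⟨n, rfl⟩ : ∃ n, s₀ = n + 1 := ⟨s₀ - 1, by omega⟩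
    have := maxPrefixLe_prefixSum_succ_le hV hdear (mt (hs₀_le n).2 (by omega))
    rw [hT, le_antisymm this ht₀_le]
  · simp only [hT 0, prefixSum_zero, zero_add, Nat.cast_zero, zero_sub]
    rfl
end
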